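/- Let n ≥ 1 and let Φ ⊆ B_n = {±e_i ± e_j : i ≠ j} ∪ {±e_i : 1 ≤ i ≤ n} be a root subsystem. Then there exist a sign function ε : {1,…,n} → {1,−1}, a partition P of {1,…,n}, and a type assignment t from P to {A, D, B}, such that D_ε(Φ) = ⋃_{B∈P} Φ_{t(B)}(B), where D_ε is the linear automorphism of ℝ^n with D_ε(e_i) = ε(i)·e_i. -/
import Mathlib


open Finset

noncomputable section

/-- Standard basis vector `e i` of `ℝ^n`. -/
def E {n : ℕ} (i : Fin n) : Fin n → ℝ := Pi.single i 1

/-- Standard inner product on `ℝ^n`. -/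
def dot {n : ℕ} (v w : Fin n → ℝ) : ℝ := ∑ i, v i * w i

/-- Reflection across the hyperplane orthogonal to `α`. -/
def reflRoot {n : ℕ} (α v : Fin n → ℝ) : Fin n → ℝ := v - (2 * dot v α / dot α α) • α

/-- The root system `A_{n-1}`. -/
def Aset (n : ℕ) : Set (Fin n → ℝ) := {α | ∃ i j : Fin n, i ≠ j ∧ α = E i - E j}

/-- The root system `D_n`. -/
def Dset (n : ℕ) : Set (Fin n → ℝ) :=
  {α | ∃ i j : Fin n, i ≠ j ∧ (α = E i - E j ∨ α = E i + E j ∨ α = -(E i + E j))}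

/-- The root system `B_n`. -/
def Bset (n : ℕ) : Set (Fin n → ℝ) := Dset n ∪ {α | ∃ i : Fin n, α = E i ∨ α = -E i}

/-- The root system `C_n`. -/
def Cset (n : ℕ) : Set (Fin n → ℝ) :=
  Dset n ∪ {α | ∃ i : Fin n, α = (2:ℝ) • E i ∨ α = -((2:ℝ) • E i)}

/-- The nonreduced root system `BC_n`. -/
def BCset (n : ℕ) : Set (Fin n → ℝ) := Bset n ∪ Cset n

/-- Types of classical irreducible root (sub)systems. -/
inductive RType | A | D | B | C | BC
deriving DecidableEq

/-- Type-`A` system on a block `B`. -/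
def PhiA {n : ℕ} (B : Finset (Fin n)) : Set (Fin n → ℝ) :=
  {α | ∃ i ∈ B, ∃ j ∈ B, i ≠ j ∧ α = E i - E j}

/-- Type-`D` system on a block `B`. -/
def PhiD {n : ℕ} (B : Finset (Fin n)) : Set (Fin n → ℝ) :=
  {α | ∃ i ∈ B, ∃ j ∈ B, i ≠ j ∧ (α = E i - E j ∨ α = E i + E j ∨ α = -(E i + E j))}

/-- Type-`B` system on a block `B`. -/
def PhiB {n : ℕ} (B : Finset (Fin n)) : Set (Fin n → ℝ) :=
  PhiD B ∪ {α | ∃ i ∈ B, α = E i ∨ α = -E i}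

/-- Type-`C` system on a block `B`. -/
def PhiC {n : ℕ} (B : Finset (Fin n)) : Set (Fin n → ℝ) :=
  PhiD B ∪ {α | ∃ i ∈ B, α = (2:ℝ) • E i ∨ α = -((2:ℝ) • E i)}

/-- Type-`BC` system on a block `B`. -/
def PhiBC {n : ℕ} (B : Finset (Fin n)) : Set (Fin n → ℝ) := PhiB B ∪ PhiC B

/-- The classical system of the given type on a block. -/
def PhiOf {n : ℕ} : RType → Finset (Fin n) → Set (Fin n → ℝ)
  | RType.A => PhiA
  | RType.D => PhiD
  | RType.B => PhiB
  | RType.C => PhiC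
  | RType.BC => PhiBC

namespace Cls
variable {n : ℕ}

@[simp] lemma E_apply (i m : Fin n) : E i m = if m = i then 1 else 0 := by
  simp [E, Pi.single_apply]

lemma dot_E_left (i : Fin n) (v : Fin n → ℝ) : dot (E i) v = v i := by
  simp [dot, E, Pi.single_apply, ite_mul]

@[simp] lemma dot_add_left (a b c : Fin n → ℝ) : dot (a + b) c = dot a c + dot b c := by
  simp [dot, add_mul, Finset.sum_add_distrib]

@[simp] lemma dot_smul_left (r : ℝ) (a b : Fin n → ℝ) : dot (r • a) b = r * dot a b := by
  simp [dot, Finset.mul_sum, mul_assoc]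

lemma dot_comm (a b : Fin n → ℝ) : dot a b = dot b a := by
  simp [dot, mul_comm]

@[simp] lemma dot_add_right (a b c : Fin n → ℝ) : dot a (b + c) = dot a b + dot a c := by
  rw [dot_comm, dot_add_left, dot_comm b a, dot_comm c a]

@[simp] lemma dot_smul_right (r : ℝ) (a b : Fin n → ℝ) : dot a (r • b) = r * dot a b := by
  rw [dot_comm, dot_smul_left, dot_comm b a]

@[simp] lemma dot_E_E (i j : Fin n) : dot (E i) (E j) = if i = j then 1 else 0 := by
  rw [dot_E_left]; simp [eq_comm]

@[simp] lemma dot_neg_left (a b : Fin n → ℝ) : dot (-a) b = -dot a b := by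
  simp [dot, Finset.sum_neg_distrib]

@[simp] lemma dot_neg_right (a b : Fin n → ℝ) : dot a (-b) = -dot a b := by
  rw [dot_comm, dot_neg_left, dot_comm b a]

def sg (s : ℝ) : Prop := s = 1 ∨ s = -1

lemma rr_neg_long (i j : Fin n) (hij : i ≠ j) {s t : ℝ} (hs : sg s) (ht : sg t) :
    reflRoot (s•E i + t•E j) (s•E i + t•E j) = (-s)•E i + (-t)•E j := by
  rcases hs with rfl|rfl <;> rcases ht with rfl|rfl <;>
    (funext x; simp [reflRoot, hij, Ne.symm hij]; split_ifs <;> (try simp_all) <;> norm_num)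

lemma rr_neg_short (i : Fin n) {u : ℝ} (hu : sg u) :
    reflRoot (u•E i) (u•E i) = (-u)•E i := by
  rcases hu with rfl|rfl <;>
    (funext x; simp [reflRoot]; split_ifs <;> (try simp_all) <;> norm_num)

lemma rr_long_short (i j : Fin n) (hij : i ≠ j) {s t u : ℝ} (hs : sg s) (ht : sg t) (hu : sg u) :
    reflRoot (s•E i + t•E j) (u•E i) = (-(u*s*t))•E j := by
  rcases hs with rfl|rfl <;> rcases ht with rfl|rfl <;> rcases hu with rfl|rfl <;>
    (funext x; simp [reflRoot, hij, Ne.symm hij]; split_ifs <;> (try simp_all) <;> norm_num)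

lemma rr_short_long (i j : Fin n) (hij : i ≠ j) {s t u : ℝ} (hs : sg s) (ht : sg t) (hu : sg u) :
    reflRoot (u•E i) (s•E i + t•E j) = (-s)•E i + t•E j := by
  rcases hs with rfl|rfl <;> rcases ht with rfl|rfl <;> rcases hu with rfl|rfl <;>
    (funext x; simp [reflRoot, hij, Ne.symm hij]; split_ifs <;> (try simp_all) <;> norm_num)

lemma rr_comp (i j k : Fin n) (hij : i ≠ j) (hik : i ≠ k) (hjk : j ≠ k)
    {s t u v : ℝ} (hs : sg s) (ht : sg t) (hu : sg u) (hv : sg v) :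
    reflRoot (s•E i + t•E j) (u•E j + v•E k) = (-(s*t*u))•E i + v•E k := by
  rcases hs with rfl|rfl <;> rcases ht with rfl|rfl <;> rcases hu with rfl|rfl <;> rcases hv with rfl|rfl <;>
    (funext x; simp [reflRoot, hij, hik, hjk, Ne.symm hij, Ne.symm hik, Ne.symm hjk];
     split_ifs <;> (try simp_all) <;> norm_num)

section Struct
variable (Φ : Set (Fin n → ℝ))

/-- long root relation -/
def R (i j : Fin n) (s t : ℝ) : Prop := (s • E i + t • E j : Fin n → ℝ) ∈ Φ

variable {Φ}
variable (hcl : ∀ α ∈ Φ, ∀ β ∈ Φ, reflRoot α β ∈ Φ)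

lemma Rcomm {i j : Fin n} {s t : ℝ} (h : R Φ i j s t) : R Φ j i t s := by
  unfold R at *; rwa [add_comm]

include hcl

lemma Rneg {i j : Fin n} (hij : i ≠ j) {s t : ℝ} (hs : sg s) (ht : sg t)
    (h : R Φ i j s t) : R Φ i j (-s) (-t) := by
  have := hcl _ h _ h
  rwa [rr_neg_long i j hij hs ht] at this

lemma Sneg {i : Fin n} {u : ℝ} (hu : sg u) (h : (u • E i : Fin n → ℝ) ∈ Φ) :
    ((-u) • E i : Fin n → ℝ) ∈ Φ := by
  have := hcl _ h _ h
  rwa [rr_neg_short i hu] at this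

lemma Sneg' {i : Fin n} (h : (E i : Fin n → ℝ) ∈ Φ) : (-E i : Fin n → ℝ) ∈ Φ := by
  have := Sneg hcl (Or.inl rfl) (by rwa [one_smul] : ((1:ℝ) • E i : Fin n → ℝ) ∈ Φ)
  rwa [neg_smul, one_smul] at this

lemma Sneg'' {i : Fin n} (h : (-E i : Fin n → ℝ) ∈ Φ) : (E i : Fin n → ℝ) ∈ Φ := by
  have h' : ((-1:ℝ) • E i : Fin n → ℝ) ∈ Φ := by rwa [neg_smul, one_smul]
  have := Sneg hcl (Or.inr rfl) h'
  rwa [neg_neg, one_smul] at this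

/-- short at i plus long on {i,j} gives short at j -/
lemma short_prop {i j : Fin n} (hij : i ≠ j) {s t : ℝ} (hs : sg s) (ht : sg t)
    (hr : R Φ i j s t) (hsh : (E i : Fin n → ℝ) ∈ Φ) : (E j : Fin n → ℝ) ∈ Φ := by
  have h1 : ((1:ℝ) • E i : Fin n → ℝ) ∈ Φ := by rwa [one_smul]
  have := hcl _ hr _ h1
  rw [rr_long_short i j hij hs ht (Or.inl rfl)] at this
  rcases hs with rfl|rfl <;> rcases ht with rfl|rfl <;> norm_num at this
  · exact Sneg'' hcl this
  · exact this
  · exact this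
  · exact Sneg'' hcl this

/-- short at i flips first sign of long root -/
lemma short_flip {i j : Fin n} (hij : i ≠ j) {s t : ℝ} (hs : sg s) (ht : sg t)
    (hsh : (E i : Fin n → ℝ) ∈ Φ) (hr : R Φ i j s t) : R Φ i j (-s) t := by
  have h1 : ((1:ℝ) • E i : Fin n → ℝ) ∈ Φ := by rwa [one_smul]
  have := hcl _ h1 _ hr
  rwa [rr_short_long i j hij hs ht (Or.inl rfl)] at this

/-- composition -/
lemma Rtrans {i j k : Fin n} (hij : i ≠ j) (hik : i ≠ k) (hjk : j ≠ k)
    {s t u v : ℝ} (hs : sg s) (ht : sg t) (hu : sg u) (hv : sg v)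
    (h1 : R Φ i j s t) (h2 : R Φ j k u v) : R Φ i k (-(s*t*u)) v := by
  have := hcl _ h1 _ h2
  rwa [rr_comp i j k hij hik hjk hs ht hu hv] at this

end Struct

section Struct2
variable (Φ : Set (Fin n → ℝ))

def Rel (i j : Fin n) : Prop := i ≠ j ∧ ∃ s t : ℝ, sg s ∧ sg t ∧ R Φ i j s t

open Classical in
def blk (i : Fin n) : Finset (Fin n) :=
  @Finset.filter _ (fun j => j = i ∨ Rel Φ i j) (Classical.decPred _) Finset.univ

def DP (i j : Fin n) : Prop := i ≠ j ∧ R Φ i j 1 1 ∧ R Φ i j 1 (-1)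

open Classical in
def typ (F : Finset (Fin n)) : RType :=
  if ∃ j ∈ F, (E j : Fin n → ℝ) ∈ Φ then RType.B
  else if ∃ j ∈ F, ∃ k ∈ F, DP Φ j k then RType.D
  else RType.A

open Classical in
def pv (j k : Fin n) : ℝ := if (E j + E k : Fin n → ℝ) ∈ Φ then 1 else -1

open Classical in
def rep (i : Fin n) : Fin n := if h : (blk Φ i).Nonempty then (blk Φ i).min' h else i

open Classical in
def eps (i : Fin n) : ℝ :=
  if typ Φ (blk Φ i) = RType.A ∧ i ≠ rep Φ i then -(pv Φ (rep Φ i) i) else 1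

variable {Φ}

lemma mem_blk {i j : Fin n} : j ∈ blk Φ i ↔ (j = i ∨ Rel Φ i j) := by
  simp [blk, Finset.mem_filter]

lemma self_mem_blk (i : Fin n) : i ∈ blk Φ i := mem_blk.2 (Or.inl rfl)

lemma Rel.symm {i j : Fin n} (h : Rel Φ i j) : Rel Φ j i := by
  obtain ⟨hij, s, t, hs, ht, hr⟩ := h
  exact ⟨hij.symm, t, s, ht, hs, Rcomm hr⟩

variable (hcl : ∀ α ∈ Φ, ∀ β ∈ Φ, reflRoot α β ∈ Φ)
include hcl

lemma Rel.trans {i j k : Fin n} (h1 : Rel Φ i j) (h2 : Rel Φ j k) (hik : i ≠ k) :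
    Rel Φ i k := by
  obtain ⟨hij, s, t, hs, ht, hr1⟩ := h1
  obtain ⟨hjk, u, v, hu, hv, hr2⟩ := h2
  exact ⟨hik, _, _, by rcases hs with rfl|rfl <;> rcases ht with rfl|rfl <;>
    rcases hu with rfl|rfl <;> simp [sg], hv, Rtrans hcl hij hik hjk hs ht hu hv hr1 hr2⟩

lemma blk_eq {i j : Fin n} (h : j ∈ blk Φ i) : blk Φ j = blk Φ i := by
  rcases mem_blk.1 h with rfl | hrel
  · rfl
  · ext m
    simp only [mem_blk]
    constructor
    · rintro (rfl | hjm)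
      · exact Or.inr hrel
      · by_cases him : i = m
        · exact Or.inl him.symm
        · exact Or.inr (hrel.trans hcl hjm him)
    · rintro (rfl | him)
      · exact Or.inr hrel.symm
      · by_cases hjm : j = m
        · exact Or.inl hjm.symm
        · exact Or.inr (hrel.symm.trans hcl him hjm)

lemma relOf {i a b : Fin n} (ha : a ∈ blk Φ i) (hb : b ∈ blk Φ i) (hab : a ≠ b) :
    Rel Φ a b := by
  have hb' : b ∈ blk Φ a := by rw [blk_eq hcl ha]; exact hb
  rcases mem_blk.1 hb' with rfl | h
  · exact absurd rfl hab.symm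
  · exact h

lemma rep_mem (i : Fin n) : rep Φ i ∈ blk Φ i := by
  rw [rep, dif_pos ⟨i, self_mem_blk i⟩]
  exact Finset.min'_mem _ _

lemma rep_congr {i j : Fin n} (h : j ∈ blk Φ i) : rep Φ j = rep Φ i := by
  rw [rep, rep, blk_eq hcl h,
    dif_pos ⟨i, self_mem_blk i⟩, dif_pos ⟨i, self_mem_blk i⟩]

end Struct2

section Class
variable {Φ : Set (Fin n → ℝ)}

lemma sg_one : sg (1:ℝ) := Or.inl rfl
lemma sg_neg_one : sg (-1:ℝ) := Or.inr rfl
lemma sg.neg {s : ℝ} (h : sg s) : sg (-s) := by rcases h with rfl|rfl <;> simp [sg]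
lemma sg.mul {s t : ℝ} (hs : sg s) (ht : sg t) : sg (s*t) := by
  rcases hs with rfl|rfl <;> rcases ht with rfl|rfl <;> norm_num [sg]
lemma sg_pv (a b : Fin n) : sg (pv Φ a b) := by
  unfold pv; split_ifs <;> simp [sg]

variable (hcl : ∀ α ∈ Φ, ∀ β ∈ Φ, reflRoot α β ∈ Φ)
include hcl

lemma Rnorm {a b : Fin n} (hab : a ≠ b) {s t : ℝ} (hs : sg s) (ht : sg t)
    (h : R Φ a b s t) : R Φ a b 1 (s*t) := by
  rcases hs with rfl|rfl
  · rwa [one_mul]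
  · rw [neg_one_mul]
    have := Rneg hcl hab sg_neg_one ht h
    rwa [neg_neg] at this

lemma Rdenorm {a b : Fin n} (hab : a ≠ b) {p s t : ℝ} (hs : sg s) (ht : sg t)
    (hst : s * t = p) (h : R Φ a b 1 p) : R Φ a b s t := by
  rcases hs with rfl|rfl
  · rw [one_mul] at hst; rwa [hst]
  · have := Rneg hcl hab sg_one (hst ▸ (sg_neg_one.mul ht)) h
    rw [neg_one_mul] at hst
    have h2 : -p = t := by rw [← hst, neg_neg]
    rwa [h2] at this

lemma DP_of_both {a b : Fin n} (hab : a ≠ b) {w : ℝ} (hw : sg w)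
    (h1 : R Φ a b 1 w) (h2 : R Φ a b 1 (-w)) : DP Φ a b := by
  rcases hw with rfl|rfl
  · exact ⟨hab, h1, h2⟩
  · exact ⟨hab, by rwa [neg_neg] at h2, h1⟩

lemma DP.rel {a b : Fin n} (h : DP Φ a b) : Rel Φ a b :=
  ⟨h.1, 1, 1, sg_one, sg_one, h.2.1⟩

lemma DP.symm' {a b : Fin n} (h : DP Φ a b) : DP Φ b a := by
  obtain ⟨hab, h11, h1m⟩ := h
  refine ⟨hab.symm, Rcomm h11, ?_⟩
  have := Rneg hcl hab.symm sg_neg_one sg_one (Rcomm h1m)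
  rwa [neg_neg] at this

lemma DP.all {a b : Fin n} (h : DP Φ a b) {s t : ℝ} (hs : sg s) (ht : sg t) :
    R Φ a b s t := by
  rcases hs.mul ht with h'|h'
  · exact Rdenorm hcl h.1 hs ht h' h.2.1
  · exact Rdenorm hcl h.1 hs ht h' h.2.2

lemma DP.step {a b c : Fin n} (h : DP Φ a b) (hrel : Rel Φ b c) (hca : c ≠ a) :
    DP Φ a c := by
  obtain ⟨hbc, u, v, hu, hv, hr⟩ := hrel
  have h1 : R Φ a c (-(1*1*u)) v :=
    Rtrans hcl h.1 hca.symm hbc sg_one sg_one hu hv (h.all hcl sg_one sg_one) hr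
  have h2 : R Φ a c (-(1*(-1)*u)) v :=
    Rtrans hcl h.1 hca.symm hbc sg_one sg_neg_one hu hv (h.all hcl sg_one sg_neg_one) hr
  have e1 : (-(1*1*u)) = -u := by ring
  have e2 : (-(1*(-1)*u)) = u := by ring
  rw [e1] at h1; rw [e2] at h2
  have n1 : R Φ a c 1 (u*v) := Rnorm hcl hca.symm hu hv h2
  have n2 : R Φ a c 1 (-(u*v)) := by
    have := Rnorm hcl hca.symm hu.neg hv h1
    rwa [neg_mul] at this
  exact DP_of_both hcl hca.symm (hu.mul hv) n1 n2

lemma DP.spread {i a b c d : Fin n} (h : DP Φ a b) (ha : a ∈ blk Φ i) (hb : b ∈ blk Φ i)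
    (hc : c ∈ blk Φ i) (hd : d ∈ blk Φ i) (hcd : c ≠ d) : DP Φ c d := by
  have key : ∀ e ∈ blk Φ i, e ≠ a → e ≠ b → DP Φ a e ∧ DP Φ b e := by
    intro e he hea heb
    have hbe : Rel Φ b e := relOf hcl hb he (Ne.symm heb)
    have h1 : DP Φ a e := h.step hcl hbe hea
    have hae : Rel Φ a e := relOf hcl ha he (Ne.symm hea)
    have h2 : DP Φ b e := (h.symm' hcl).step hcl hae heb
    exact ⟨h1, h2⟩
  by_cases hca : c = a
  · subst hca
    by_cases hdb : d = b
    · subst hdb; exact h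
    · have hda : d ≠ c := hcd.symm
      exact (key d hd hda hdb).1
  · by_cases hcb : c = b
    · subst hcb
      by_cases hda : d = a
      · subst hda; exact h.symm' hcl
      · exact (key d hd hda hcd.symm).2
    · have hc' : DP Φ b c := (key c hc hca hcb).2
      by_cases hda : d = a
      · subst hda; exact ((key c hc hca hcb).1).symm' hcl
      · by_cases hdb : d = b
        · subst hdb; exact hc'.symm' hcl
        · have hrel : Rel Φ b d := relOf hcl hb hd (Ne.symm hdb)
          exact (hc'.symm' hcl).step hcl hrel hcd.symm

lemma allLong {a b : Fin n} (hab : a ≠ b) (ha : (E a : Fin n → ℝ) ∈ Φ)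
    (hb : (E b : Fin n → ℝ) ∈ Φ) {s₀ t₀ : ℝ} (hs₀ : sg s₀) (ht₀ : sg t₀)
    (h : R Φ a b s₀ t₀) {s t : ℝ} (hs : sg s) (ht : sg t) : R Φ a b s t := by
  have h2 : R Φ a b s₀ (-t₀) := Rcomm (short_flip hcl hab.symm ht₀ hs₀ hb (Rcomm h))
  have n1 : R Φ a b 1 (s₀*t₀) := Rnorm hcl hab hs₀ ht₀ h
  have n2 : R Φ a b 1 (-(s₀*t₀)) := by
    have := Rnorm hcl hab hs₀ ht₀.neg h2
    rwa [mul_neg] at this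
  exact (DP_of_both hcl hab (hs₀.mul ht₀) n1 n2).all hcl hs ht

lemma sh_all {i : Fin n} (hex : ∃ j ∈ blk Φ i, (E j : Fin n → ℝ) ∈ Φ) :
    ∀ k ∈ blk Φ i, (E k : Fin n → ℝ) ∈ Φ := by
  obtain ⟨j, hj, hsh⟩ := hex
  intro k hk
  by_cases hjk : j = k
  · exact hjk ▸ hsh
  · obtain ⟨hne, s, t, hs, ht, hr⟩ := relOf hcl hj hk hjk
    exact short_prop hcl hne hs ht hr hsh

lemma pv_eq {a b : Fin n} (hab : a ≠ b) (hnd : ¬ DP Φ a b) {s t : ℝ}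
    (hs : sg s) (ht : sg t) (h : R Φ a b s t) : pv Φ a b = s * t := by
  have h1 : R Φ a b 1 (s*t) := Rnorm hcl hab hs ht h
  unfold pv
  split_ifs with hm
  · rcases hs.mul ht with h'|h'
    · exact h'.symm
    · exfalso
      apply hnd
      refine ⟨hab, ?_, h' ▸ h1⟩
      unfold R; rwa [one_smul, one_smul]
  · rcases hs.mul ht with h'|h'
    · exfalso
      apply hm
      rw [h'] at h1
      unfold R at h1; rwa [one_smul, one_smul] at h1
    · exact h'.symm

lemma pvR {a b : Fin n} (hrel : Rel Φ a b) (hnd : ¬ DP Φ a b) :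
    R Φ a b 1 (pv Φ a b) := by
  obtain ⟨hab, s, t, hs, ht, hr⟩ := hrel
  have := Rnorm hcl hab hs ht hr
  rwa [pv_eq hcl hab hnd hs ht hr]

lemma pv_symm {a b : Fin n} (hrel : Rel Φ a b) (hnd : ¬ DP Φ a b)
    (hnd' : ¬ DP Φ b a) : pv Φ a b = pv Φ b a := by
  have h := pvR hcl hrel hnd
  have := pv_eq hcl hrel.1.symm hnd' (sg_pv a b) sg_one (Rcomm h)
  rw [this, mul_one]

lemma pv_trans {a b c : Fin n} (hab : Rel Φ a b) (hbc : Rel Φ b c) (hac : Rel Φ a c)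
    (nab : ¬ DP Φ a b) (nbc : ¬ DP Φ b c) (nac : ¬ DP Φ a c) :
    pv Φ a c = -(pv Φ a b * pv Φ b c) := by
  have h1 := pvR hcl hab nab
  have h2 := pvR hcl hbc nbc
  have h3 : R Φ a c (-(1 * pv Φ a b * 1)) (pv Φ b c) :=
    Rtrans hcl hab.1 hac.1 hbc.1 sg_one (sg_pv a b) sg_one (sg_pv b c) h1 h2
  have e1 : (-(1 * pv Φ a b * 1)) = -(pv Φ a b) := by ring
  rw [e1] at h3
  have h4 := pv_eq hcl hac.1 nac (sg_pv a b).neg (sg_pv b c) h3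
  rw [h4]; ring

end Class

section Class2
variable {Φ : Set (Fin n → ℝ)}

lemma typ_cases (F : Finset (Fin n)) :
    typ Φ F = RType.A ∨ typ Φ F = RType.D ∨ typ Φ F = RType.B := by
  unfold typ; split_ifs <;> simp

lemma typ_A_elim {F : Finset (Fin n)} (h : typ Φ F = RType.A) :
    (¬ ∃ j ∈ F, (E j : Fin n → ℝ) ∈ Φ) ∧ ¬ ∃ j ∈ F, ∃ k ∈ F, DP Φ j k := by
  unfold typ at h; split_ifs at h with h1 h2
  exact ⟨h1, h2⟩

lemma typ_B_elim {F : Finset (Fin n)} (h : typ Φ F = RType.B) :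
    ∃ j ∈ F, (E j : Fin n → ℝ) ∈ Φ := by
  unfold typ at h; split_ifs at h with h1 h2 <;> first | exact h1 | simp at h

lemma typ_D_elim {F : Finset (Fin n)} (h : typ Φ F = RType.D) :
    (¬ ∃ j ∈ F, (E j : Fin n → ℝ) ∈ Φ) ∧ ∃ j ∈ F, ∃ k ∈ F, DP Φ j k := by
  unfold typ at h; split_ifs at h with h1 h2 <;> first | exact ⟨h1, h2⟩ | simp at h

lemma typ_B_of_short {i : Fin n} (h : (E i : Fin n → ℝ) ∈ Φ) :
    typ Φ (blk Φ i) = RType.B := by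
  unfold typ
  rw [if_pos ⟨i, self_mem_blk i, h⟩]

lemma eps_sg (i : Fin n) : sg (eps Φ i) := by
  unfold eps; split_ifs
  · exact (sg_pv _ _).neg
  · exact sg_one

lemma eps_one {i : Fin n} (h : typ Φ (blk Φ i) ≠ RType.A) : eps Φ i = 1 := by
  unfold eps
  rw [if_neg (by tauto)]

variable (hcl : ∀ α ∈ Φ, ∀ β ∈ Φ, reflRoot α β ∈ Φ)
include hcl

lemma eps_rep_A {i a : Fin n} (ha : a ∈ blk Φ i) (hA : typ Φ (blk Φ i) = RType.A)
    (hne : a ≠ rep Φ i) : eps Φ a = -(pv Φ (rep Φ i) a) := by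
  unfold eps
  rw [rep_congr hcl ha, blk_eq hcl ha]
  rw [if_pos ⟨hA, hne⟩]

lemma eps_rep_self {i a : Fin n} (ha : a ∈ blk Φ i) (hrep : a = rep Φ i) :
    eps Φ a = 1 := by
  unfold eps
  rw [rep_congr hcl ha]
  rw [if_neg (by tauto)]

lemma eps_prod {i a b : Fin n} (hA : typ Φ (blk Φ i) = RType.A)
    (ha : a ∈ blk Φ i) (hb : b ∈ blk Φ i) (hab : a ≠ b) :
    eps Φ a * eps Φ b = -(pv Φ a b) := by
  obtain ⟨hnsh, hndp⟩ := typ_A_elim hA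
  have nd : ∀ x ∈ blk Φ i, ∀ y ∈ blk Φ i, ¬ DP Φ x y := by
    intro x hx y hy hdp
    exact hndp ⟨x, hx, y, hy, hdp⟩
  have hr : rep Φ i ∈ blk Φ i := rep_mem hcl i
  by_cases hra : a = rep Φ i
  · have h1 : eps Φ a = 1 := eps_rep_self hcl ha hra
    have hbr : b ≠ rep Φ i := by rw [← hra]; exact hab.symm
    have h2 : eps Φ b = -(pv Φ (rep Φ i) b) := eps_rep_A hcl hb hA hbr
    rw [h1, h2, one_mul, ← hra]
  · have h1 : eps Φ a = -(pv Φ (rep Φ i) a) := eps_rep_A hcl ha hA hra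
    by_cases hrb : b = rep Φ i
    · have h2 : eps Φ b = 1 := eps_rep_self hcl hb hrb
      have hrel : Rel Φ a b := relOf hcl ha hb hab
      have := pv_symm hcl hrel (nd a ha b hb) (nd b hb a ha)
      rw [h1, h2, mul_one, ← hrb, this]
    · have h2 : eps Φ b = -(pv Φ (rep Φ i) b) := eps_rep_A hcl hb hA hrb
      rw [h1, h2]
      have har : Rel Φ a (rep Φ i) := relOf hcl ha hr hra
      have hrb' : Rel Φ (rep Φ i) b := relOf hcl hr hb (fun h => hrb h.symm)
      have hab' : Rel Φ a b := relOf hcl ha hb hab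
      have ht := pv_trans hcl har hrb' hab' (nd a ha _ hr) (nd _ hr b hb) (nd a ha b hb)
      have hs := pv_symm hcl har (nd a ha _ hr) (nd _ hr a ha)
      rw [ht, hs]; ring

end Class2

section Dmap
variable {n : ℕ}

lemma Dm2 (ε : Fin n → ℝ) (c d : ℝ) (a b : Fin n) :
    (fun j => ε j * ((c•E a + d•E b : Fin n → ℝ) j)) = ((ε a * c)•E a + (ε b * d)•E b : Fin n → ℝ) := by
  funext x
  simp only [Pi.add_apply, Pi.smul_apply, E_apply, smul_eq_mul]
  split_ifs <;> (try simp_all) <;> ring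

lemma Dm1 (ε : Fin n → ℝ) (c : ℝ) (a : Fin n) :
    (fun j => ε j * ((c•E a : Fin n → ℝ) j)) = ((ε a * c)•E a : Fin n → ℝ) := by
  funext x
  simp only [Pi.smul_apply, E_apply, smul_eq_mul]
  split_ifs with h <;> (try subst h) <;> ring

lemma Dinv {ε : Fin n → ℝ} (hε : ∀ i, sg (ε i)) (v : Fin n → ℝ) :
    (fun j => ε j * (ε j * v j)) = v := by
  funext x
  rcases hε x with h|h <;> rw [h] <;> ring

lemma image_eq {ε : Fin n → ℝ} (hε : ∀ i, sg (ε i)) (Φ : Set (Fin n → ℝ)) :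
    (fun v : Fin n → ℝ => fun j => ε j * v j) '' Φ = {v | (fun j => ε j * v j) ∈ Φ} := by
  ext v
  constructor
  · rintro ⟨w, hw, rfl⟩
    simpa [Dinv hε w] using hw
  · intro hv
    exact ⟨fun j => ε j * v j, hv, Dinv hε v⟩

/-- normal forms of elements of `Bset` -/
lemma Bset_form {α : Fin n → ℝ} (h : α ∈ Bset n) :
    (∃ i s, sg s ∧ α = (s • E i : Fin n → ℝ)) ∨
    (∃ i j s t, i ≠ j ∧ sg s ∧ sg t ∧ α = (s•E i + t•E j : Fin n → ℝ)) := by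
  rcases h with ⟨i, j, hij, hf⟩ | ⟨i, hf⟩
  · right
    rcases hf with rfl | rfl | rfl
    · exact ⟨i, j, 1, -1, hij, sg_one, sg_neg_one, by rw [one_smul, neg_smul, one_smul, sub_eq_add_neg]⟩
    · exact ⟨i, j, 1, 1, hij, sg_one, sg_one, by rw [one_smul, one_smul]⟩
    · exact ⟨i, j, -1, -1, hij, sg_neg_one, sg_neg_one, by rw [neg_smul, neg_smul, one_smul, one_smul, neg_add]⟩
  · left
    rcases hf with rfl | rfl
    · exact ⟨i, 1, sg_one, (one_smul ℝ _).symm⟩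
    · exact ⟨i, -1, sg_neg_one, by rw [neg_smul, one_smul]⟩

lemma mem_PhiD {F : Finset (Fin n)} {a b : Fin n} (ha : a ∈ F) (hb : b ∈ F)
    (hab : a ≠ b) {s t : ℝ} (hs : sg s) (ht : sg t) :
    (s•E a + t•E b : Fin n → ℝ) ∈ PhiD F := by
  rcases hs with rfl|rfl <;> rcases ht with rfl|rfl
  · exact ⟨a, ha, b, hb, hab, Or.inr (Or.inl (by rw [one_smul, one_smul]))⟩
  · exact ⟨a, ha, b, hb, hab, Or.inl (by rw [one_smul, neg_smul, one_smul, sub_eq_add_neg])⟩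
  · exact ⟨b, hb, a, ha, hab.symm, Or.inl (by rw [one_smul, neg_smul, one_smul, sub_eq_add_neg, add_comm])⟩
  · exact ⟨a, ha, b, hb, hab, Or.inr (Or.inr (by rw [neg_smul, neg_smul, one_smul, one_smul, neg_add]))⟩

lemma mem_PhiA {F : Finset (Fin n)} {a b : Fin n} (ha : a ∈ F) (hb : b ∈ F)
    (hab : a ≠ b) {s t : ℝ} (hs : sg s) (ht : sg t) (hst : s * t = -1) :
    (s•E a + t•E b : Fin n → ℝ) ∈ PhiA F := by
  rcases hs with rfl|rfl <;> rcases ht with rfl|rfl <;> norm_num at hst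
  · exact ⟨a, ha, b, hb, hab, by rw [one_smul, neg_smul, one_smul, sub_eq_add_neg]⟩
  · exact ⟨b, hb, a, ha, hab.symm, by rw [one_smul, neg_smul, one_smul, sub_eq_add_neg, add_comm]⟩

/-- normal forms of PhiD elements -/
lemma PhiD_form {F : Finset (Fin n)} {α : Fin n → ℝ} (h : α ∈ PhiD F) :
    ∃ a ∈ F, ∃ b ∈ F, ∃ s t, a ≠ b ∧ sg s ∧ sg t ∧ α = (s•E a + t•E b : Fin n → ℝ) := by
  obtain ⟨a, ha, b, hb, hab, hf⟩ := h
  rcases hf with rfl | rfl | rfl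
  · exact ⟨a, ha, b, hb, 1, -1, hab, sg_one, sg_neg_one, by rw [one_smul, neg_smul, one_smul, sub_eq_add_neg]⟩
  · exact ⟨a, ha, b, hb, 1, 1, hab, sg_one, sg_one, by rw [one_smul, one_smul]⟩
  · exact ⟨a, ha, b, hb, -1, -1, hab, sg_neg_one, sg_neg_one, by rw [neg_smul, neg_smul, one_smul, one_smul, neg_add]⟩

end Dmap

section Forms
variable {n : ℕ}

lemma EsubForm (a b : Fin n) : (E a - E b : Fin n → ℝ) = (1:ℝ)•E a + (-1:ℝ)•E b := by
  rw [one_smul, neg_smul, one_smul, sub_eq_add_neg]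

lemma EnegForm (a : Fin n) : (-E a : Fin n → ℝ) = ((-1:ℝ))•E a := by
  rw [neg_smul, one_smul]

lemma EoneForm (a : Fin n) : (E a : Fin n → ℝ) = (1:ℝ)•E a := (one_smul ℝ _).symm

end Forms

end Cls

/-- Classification of root subsystems (Corollary 4.5). -/
theorem stmt11 (n : ℕ) (hn : 1 ≤ n) (Φ : Set (Fin n → ℝ)) (hsub : Φ ⊆ Bset n)
    (hcl : ∀ α ∈ Φ, ∀ β ∈ Φ, reflRoot α β ∈ Φ) :
    ∃ (ε : Fin n → ℝ) (blk : Fin n → Finset (Fin n)) (t : Finset (Fin n) → RType),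
      (∀ i, ε i = 1 ∨ ε i = -1) ∧
      (∀ i, i ∈ blk i) ∧ (∀ i j, j ∈ blk i → blk j = blk i) ∧
      (∀ i, t (blk i) = RType.A ∨ t (blk i) = RType.D ∨ t (blk i) = RType.B) ∧
      (fun v : Fin n → ℝ => fun j => ε j * v j) '' Φ =
        ⋃ i, PhiOf (t (blk i)) (blk i) := by
  classical
  have hε : ∀ i, Cls.sg (Cls.eps Φ i) := fun i => Cls.eps_sg i
  refine ⟨Cls.eps Φ, Cls.blk Φ, Cls.typ Φ, hε, (fun i => Cls.self_mem_blk i),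
    (fun i j h => Cls.blk_eq hcl h), (fun i => Cls.typ_cases _), ?_⟩
  rw [Cls.image_eq hε]
  ext v
  simp only [Set.mem_setOf_eq, Set.mem_iUnion]
  constructor
  · intro hv
    rcases Cls.Bset_form (hsub hv) with ⟨a, s, hs, hform⟩ | ⟨a, b, s, t, hab, hs, ht, hform⟩
    · -- short root
      have hsh : (E a : Fin n → ℝ) ∈ Φ := by
        rcases hs with rfl|rfl
        · rw [one_smul] at hform; exact hform ▸ hv
        · rw [← Cls.EnegForm] at hform; exact Cls.Sneg'' hcl (hform ▸ hv)
      have hB : Cls.typ Φ (Cls.blk Φ a) = RType.B := Cls.typ_B_of_short hsh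
      have heps : Cls.eps Φ a = 1 := Cls.eps_one (by rw [hB]; simp)
      have hveq : v = ((Cls.eps Φ a * s)•E a : Fin n → ℝ) := by
        rw [← Cls.Dm1 (Cls.eps Φ) s a, ← hform]
        exact (Cls.Dinv hε v).symm
      rw [heps, one_mul] at hveq
      refine ⟨a, ?_⟩
      rw [hB]
      show v ∈ PhiB (Cls.blk Φ a)
      right
      rcases hs with rfl|rfl
      · exact ⟨a, Cls.self_mem_blk a, Or.inl (by rw [hveq, one_smul])⟩
      · exact ⟨a, Cls.self_mem_blk a, Or.inr (by rw [hveq, ← Cls.EnegForm])⟩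
    · -- long root
      have hr : Cls.R Φ a b s t := by rw [Cls.R, ← hform]; exact hv
      have hrel : Cls.Rel Φ a b := ⟨hab, s, t, hs, ht, hr⟩
      have hbmem : b ∈ Cls.blk Φ a := Cls.mem_blk.2 (Or.inr hrel)
      have hamem : a ∈ Cls.blk Φ a := Cls.self_mem_blk a
      have hveq : v = ((Cls.eps Φ a * s)•E a + (Cls.eps Φ b * t)•E b : Fin n → ℝ) := by
        rw [← Cls.Dm2 (Cls.eps Φ) s t a b, ← hform]
        exact (Cls.Dinv hε v).symm
      refine ⟨a, ?_⟩
      rcases Cls.typ_cases (F := Cls.blk Φ a) (Φ := Φ) with hA | hD | hB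
      · rw [hA]
        show v ∈ PhiA (Cls.blk Φ a)
        have hprod : Cls.eps Φ a * Cls.eps Φ b = -(Cls.pv Φ a b) :=
          Cls.eps_prod hcl hA hamem hbmem hab
        have hnd : ¬ Cls.DP Φ a b := fun hdp =>
          (Cls.typ_A_elim hA).2 ⟨a, hamem, b, hbmem, hdp⟩
        have hpv : Cls.pv Φ a b = s * t := Cls.pv_eq hcl hab hnd hs ht hr
        have hstsq : (s*t) * (s*t) = 1 := by
          rcases hs with rfl|rfl <;> rcases ht with rfl|rfl <;> norm_num
        have hc : (Cls.eps Φ a * s) * (Cls.eps Φ b * t) = -1 := by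
          have : (Cls.eps Φ a * s) * (Cls.eps Φ b * t)
              = (Cls.eps Φ a * Cls.eps Φ b) * (s * t) := by ring
          rw [this, hprod, hpv]
          rw [neg_mul, hstsq]
        rw [hveq]
        exact Cls.mem_PhiA hamem hbmem hab ((hε a).mul hs) ((hε b).mul ht) hc
      · have hea : Cls.eps Φ a = 1 := Cls.eps_one (by rw [hD]; simp)
        have heb : Cls.eps Φ b = 1 := Cls.eps_one (by rw [Cls.blk_eq hcl hbmem, hD]; simp)
        rw [hD]
        show v ∈ PhiD (Cls.blk Φ a)
        rw [hveq, hea, heb, one_mul, one_mul]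
        exact Cls.mem_PhiD hamem hbmem hab hs ht
      · have hea : Cls.eps Φ a = 1 := Cls.eps_one (by rw [hB]; simp)
        have heb : Cls.eps Φ b = 1 := Cls.eps_one (by rw [Cls.blk_eq hcl hbmem, hB]; simp)
        rw [hB]
        show v ∈ PhiB (Cls.blk Φ a)
        left
        rw [hveq, hea, heb, one_mul, one_mul]
        exact Cls.mem_PhiD hamem hbmem hab hs ht
  · rintro ⟨i, hv⟩
    rcases Cls.typ_cases (F := Cls.blk Φ i) (Φ := Φ) with hA | hD | hB
    · rw [hA] at hv
      obtain ⟨a, ha, b, hb, hab, rfl⟩ := hv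
      have hnd : ¬ Cls.DP Φ a b := fun hdp =>
        (Cls.typ_A_elim hA).2 ⟨a, ha, b, hb, hdp⟩
      have hrel : Cls.Rel Φ a b := Cls.relOf hcl ha hb hab
      have hprod : Cls.eps Φ a * Cls.eps Φ b = -(Cls.pv Φ a b) := by
        have hA' : Cls.typ Φ (Cls.blk Φ i) = RType.A := hA
        exact Cls.eps_prod hcl hA' ha hb hab
      have hroot : Cls.R Φ a b 1 (Cls.pv Φ a b) := Cls.pvR hcl hrel hnd
      have hR : Cls.R Φ a b (Cls.eps Φ a) (-(Cls.eps Φ b)) := by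
        refine Cls.Rdenorm hcl hab (hε a) (hε b).neg ?_ hroot
        rw [mul_neg, hprod, neg_neg]
      rw [Cls.EsubForm, Cls.Dm2]
      rw [mul_one, mul_neg_one]
      exact hR
    · rw [hD] at hv
      obtain ⟨a, ha, b, hb, s, t, hab, hs, ht, rfl⟩ := Cls.PhiD_form hv
      obtain ⟨hnsh, j0, hj0, k0, hk0, hdp⟩ := Cls.typ_D_elim hD
      have hdab : Cls.DP Φ a b := Cls.DP.spread hcl hdp hj0 hk0 ha hb hab
      have hR : Cls.R Φ a b s t := hdab.all hcl hs ht
      have hea : Cls.eps Φ a = 1 := Cls.eps_one (by rw [Cls.blk_eq hcl ha, hD]; simp)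
      have heb : Cls.eps Φ b = 1 := Cls.eps_one (by rw [Cls.blk_eq hcl hb, hD]; simp)
      rw [Cls.Dm2, hea, heb, one_mul, one_mul]
      exact hR
    · rw [hB] at hv
      have hshorts := Cls.sh_all hcl (Cls.typ_B_elim hB)
      rcases hv with hv | ⟨a, ha, hf⟩
      · obtain ⟨a, ha, b, hb, s, t, hab, hs, ht, rfl⟩ := Cls.PhiD_form hv
        obtain ⟨hab', s0, t0, hs0, ht0, hr0⟩ := Cls.relOf hcl ha hb hab
        have hR : Cls.R Φ a b s t :=
          Cls.allLong hcl hab (hshorts a ha) (hshorts b hb) hs0 ht0 hr0 hs ht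
        have hea : Cls.eps Φ a = 1 := Cls.eps_one (by rw [Cls.blk_eq hcl ha, hB]; simp)
        have heb : Cls.eps Φ b = 1 := Cls.eps_one (by rw [Cls.blk_eq hcl hb, hB]; simp)
        rw [Cls.Dm2, hea, heb, one_mul, one_mul]
        exact hR
      · have hea : Cls.eps Φ a = 1 := Cls.eps_one (by rw [Cls.blk_eq hcl ha, hB]; simp)
        rcases hf with rfl | rfl
        · rw [Cls.EoneForm, Cls.Dm1, hea, one_mul, ← Cls.EoneForm]
          exact hshorts a ha
        · rw [Cls.EnegForm, Cls.Dm1, hea, one_mul, ← Cls.EnegForm]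
          exact Cls.Sneg' hcl (hshorts a ha)
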